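/- (Lemma 2, exact recursion and no overflow of the encrypted controller.) Let k > ℓ ≥ 1. Let the controller matrices A ∈ ℝ^{n×n}, B ∈ ℝ^{n×p}, C ∈ ℝ^{m×n}, D ∈ ℝ^{m×p} and x₀ ∈ ℝ^n have all entries in Q_{k,ℓ}; set Ā := 2^ℓ A, B̄ := 2^ℓ B, C̄ := 2^ℓ C, D̄ := 2^ℓ D. Let w : ℕ → {−1,0,1}^n be arbitrary and define x̂_p(0) = x_{p,0}, x̃(0) = 2^ℓ x₀, ŷ(t) = C_p x̂_p(t), ȳ(t) = ⌊2^ℓ ŷ(t)⌉, x̃(t+1) = ⌊(Ā x̃(t) + B̄ ȳ(t))/2^ℓ⌉ + w(t), ũ(t) = C̄ x̃(t) + D̄ ȳ(t), x̂_p(t+1) = A_p x̂_p(t) + B_p · 2^{−2ℓ} ũ(t). Suppose there exist c ≥ 1 and γ ∈ (0,1) with ‖Φ^t‖_∞ ≤ c γ^t for all t, where ‖·‖_∞ is the induced ∞-norm. Define α := ‖C_p‖_∞ + 3/2 and β := 2^ℓ ‖[x_{p,0}; x₀]‖_∞ + ‖Γ‖_∞/2 + 3/2, and let κ be an integer with κ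 ≥ k + 2 + ⌊log₂(max{n, p}·α·β·c/(1 − γ))⌋. Then for all t ∈ ℕ: (i) x̃(t+1) = A x̃(t) + B ȳ(t) + δ(t) for some δ(t) ∈ ℝ^n with ‖δ(t)‖_∞ ≤ 3/2; and (ii) every entry of ȳ(t), every entry of Ā x̃(t) + B̄ ȳ(t), and every entry of ũ(t) lies in the integer interval [−2^{κ−1}, 2^{κ−1}). -/
import Mathlib


attribute [local instance] Matrix.linftyOpNormedAddCommGroup

set_option maxHeartbeats 1000000

/-- `Q_{k,ℓ}`: the set of `k`-bit fixed-point numbers with `ℓ`-bit fractional part,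
`Q_{k,ℓ} = {2^{−ℓ} z : z ∈ ℤ, −2^{k−1} ≤ z < 2^{k−1}}`. -/
def Qfix (k ℓ : ℕ) : Set ℝ :=
  {x | ∃ z : ℤ, -2 ^ (k - 1) ≤ z ∧ z < 2 ^ (k - 1) ∧ x = (2 : ℝ) ^ (-(ℓ : ℤ)) * z}


lemma qfix_abs_le {k ℓ : ℕ} {x : ℝ} (hx : x ∈ Qfix k ℓ) :
    |x| ≤ (2:ℝ) ^ (k-1) / 2 ^ ℓ := by
  obtain ⟨z, hz1, hz2, rfl⟩ := hx
  have hz : |(z:ℝ)| ≤ (2:ℝ) ^ (k-1) := by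
    rw [abs_le]
    constructor
    · have : ((-2^(k-1) : ℤ) : ℝ) ≤ (z:ℝ) := Int.cast_le.2 hz1
      push_cast at this; linarith
    · have : ((z:ℝ)) ≤ ((2^(k-1) : ℤ) : ℝ) := le_of_lt (Int.cast_lt.2 hz2)
      push_cast at this; linarith
  rw [abs_mul, abs_of_pos (a := (2:ℝ)^(-(ℓ:ℤ))) (by positivity), zpow_neg, zpow_natCast,
    div_eq_inv_mul]
  exact mul_le_mul_of_nonneg_left hz (by positivity)

lemma mulVec_entry_abs_le {n m : ℕ} (M : Matrix (Fin n) (Fin m) ℝ) (v : Fin m → ℝ)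
    {E : ℝ} (hE : 0 ≤ E) (hM : ∀ i j, |M i j| ≤ E) (i : Fin n) :
    |M.mulVec v i| ≤ (m : ℝ) * E * ‖v‖ := by
  have habs : ∀ j, |v j| ≤ ‖v‖ := by
    intro j
    have := norm_le_pi_norm v j
    rwa [Real.norm_eq_abs] at this
  calc |M.mulVec v i| = |∑ j, M i j * v j| := by
        simp [Matrix.mulVec, dotProduct]
    _ ≤ ∑ j, |M i j * v j| := Finset.abs_sum_le_sum_abs _ _
    _ ≤ ∑ _j : Fin m, E * ‖v‖ := Finset.sum_le_sum fun j _ => by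
        rw [abs_mul]
        exact mul_le_mul (hM i j) (habs j) (abs_nonneg _) hE
    _ = m * E * ‖v‖ := by
        simp [Finset.sum_const, Finset.card_univ, mul_assoc]

/-- Lemma 2, exact recursion and no overflow of the encrypted
controller: Under the encrypted closed loop with controller data in `Q_{k,ℓ}`
(`k > ℓ ≥ 1`), arbitrary truncation errors `w(t) ∈ {−1,0,1}^n`, stability
`‖Φ^t‖_∞ ≤ c γ^t` (`c ≥ 1`, `γ ∈ (0,1)`, induced ∞-norm), constants
`α = ‖C_p‖_∞ + 3/2` and `β = 2^ℓ ‖[x_{p,0}; x₀]‖_∞ + ‖Γ‖_∞/2 + 3/2`, and an integer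
`κ ≥ k + 2 + ⌊log₂(max{n,p} α β c/(1−γ))⌋`, it holds for all `t`:
(i) `x̃(t+1) = A x̃(t) + B ȳ(t) + δ(t)` for some `δ(t)` with `‖δ(t)‖_∞ ≤ 3/2`; and
(ii) every entry of `ȳ(t)`, of `Ā x̃(t) + B̄ ȳ(t)`, and of `ũ(t)` lies in
`[−2^{κ−1}, 2^{κ−1})`. -/
theorem stmt_13 (np n m p k ℓ : ℕ)
    (hnp : 1 ≤ np) (hn : 1 ≤ n) (hm : 1 ≤ m) (hp : 1 ≤ p)
    (hℓ : 1 ≤ ℓ) (hkℓ : ℓ < k)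
    (Ap : Matrix (Fin np) (Fin np) ℝ) (Bp : Matrix (Fin np) (Fin m) ℝ)
    (Cp : Matrix (Fin p) (Fin np) ℝ)
    (A : Matrix (Fin n) (Fin n) ℝ) (B : Matrix (Fin n) (Fin p) ℝ)
    (C : Matrix (Fin m) (Fin n) ℝ) (D : Matrix (Fin m) (Fin p) ℝ)
    (xp0 : Fin np → ℝ) (x0 : Fin n → ℝ)
    (hA : ∀ i j, A i j ∈ Qfix k ℓ) (hB : ∀ i j, B i j ∈ Qfix k ℓ)
    (hC : ∀ i j, C i j ∈ Qfix k ℓ) (hD : ∀ i j, D i j ∈ Qfix k ℓ)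
    (hx0 : ∀ i, x0 i ∈ Qfix k ℓ)
    -- encrypted closed loop
    (w : ℕ → Fin n → ℝ) (hw : ∀ t i, w t i ∈ ({-1, 0, 1} : Set ℝ))
    (xph : ℕ → Fin np → ℝ) (xt : ℕ → Fin n → ℝ) (ut : ℕ → Fin m → ℝ)
    (yh : ℕ → Fin p → ℝ) (yb : ℕ → Fin p → ℝ)
    (hxph0 : xph 0 = xp0) (hxt0 : xt 0 = (2 : ℝ) ^ ℓ • x0)
    (hyh : ∀ t : ℕ, yh t = Cp.mulVec (xph t))
    (hyb : ∀ t : ℕ, ∀ i, yb t i = (round ((2 : ℝ) ^ ℓ * yh t i) : ℤ))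
    (hxt : ∀ t : ℕ, ∀ i, xt (t + 1) i =
      ((round (((((2 : ℝ) ^ ℓ • A).mulVec (xt t) +
          ((2 : ℝ) ^ ℓ • B).mulVec (yb t)) i) / (2 : ℝ) ^ ℓ) : ℤ) : ℝ) + w t i)
    (hut : ∀ t : ℕ, ut t =
      ((2 : ℝ) ^ ℓ • C).mulVec (xt t) + ((2 : ℝ) ^ ℓ • D).mulVec (yb t))
    (hxph : ∀ t : ℕ, xph (t + 1) =
      Ap.mulVec (xph t) + Bp.mulVec ((2 : ℝ) ^ (-(2 * ℓ : ℤ)) • ut t))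
    -- closed-loop matrices and stability
    (Φ : Matrix (Fin np ⊕ Fin n) (Fin np ⊕ Fin n) ℝ)
    (hΦdef : Φ = Matrix.fromBlocks (Ap + Bp * D * Cp) (Bp * C) (B * Cp) A)
    (Γ : Matrix (Fin np ⊕ Fin n) (Fin p) ℝ)
    (hΓdef : Γ = Matrix.fromRows (Bp * D) B)
    (c γ : ℝ) (hc : 1 ≤ c) (hγ0 : 0 < γ) (hγ1 : γ < 1)
    (hΦ : ∀ t : ℕ, ‖Φ ^ t‖ ≤ c * γ ^ t)
    -- the constants α, β and the bit length κ
    (α β : ℝ) (hα : α = ‖Cp‖ + 3 / 2)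
    (hβ : β = (2 : ℝ) ^ ℓ * ‖Sum.elim xp0 x0‖ + ‖Γ‖ / 2 + 3 / 2)
    (κ : ℤ)
    (hκ : κ ≥ (k : ℤ) + 2 + Int.log 2 ((max n p : ℕ) * α * β * (c / (1 - γ)))) :
    ∀ t : ℕ,
      (∃ δ : Fin n → ℝ, ‖δ‖ ≤ 3 / 2 ∧
        xt (t + 1) = A.mulVec (xt t) + B.mulVec (yb t) + δ) ∧
      (∀ i, -(2 : ℝ) ^ (κ - 1) ≤ yb t i ∧ yb t i < (2 : ℝ) ^ (κ - 1)) ∧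
      (∀ i, -(2 : ℝ) ^ (κ - 1) ≤
          (((2 : ℝ) ^ ℓ • A).mulVec (xt t) + ((2 : ℝ) ^ ℓ • B).mulVec (yb t)) i ∧
          (((2 : ℝ) ^ ℓ • A).mulVec (xt t) + ((2 : ℝ) ^ ℓ • B).mulVec (yb t)) i <
            (2 : ℝ) ^ (κ - 1)) ∧
      (∀ i, -(2 : ℝ) ^ (κ - 1) ≤ ut t i ∧ ut t i < (2 : ℝ) ^ (κ - 1)) := by

  -- basic scalars
  have hc0 : (0:ℝ) < c := lt_of_lt_of_le one_pos hc
  have h2l : (0:ℝ) < 2 ^ ℓ := by positivity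
  have h2lne : ((2:ℝ) ^ ℓ) ≠ 0 := ne_of_gt h2l
  have hRl : ((2:ℝ)^ℓ)⁻¹ * (2:ℝ)^ℓ = 1 := inv_mul_cancel₀ h2lne
  have hγ' : (0:ℝ) < 1 - γ := by linarith
  have hcg0 : (0:ℝ) < c / (1 - γ) := by positivity
  have hcg1 : (1:ℝ) ≤ c / (1 - γ) := by
    rw [le_div_iff₀ hγ']; nlinarith
  have hc' : c ≤ c / (1 - γ) := by
    rw [le_div_iff₀ hγ']; nlinarith
  -- entry bounds
  set E : ℝ := (2:ℝ)^(k-1) / 2^ℓ with hEdef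
  have hE0 : (0:ℝ) ≤ E := by rw [hEdef]; positivity
  have hAe : ∀ i j, |A i j| ≤ E := fun i j => qfix_abs_le (hA i j)
  have hBe : ∀ i j, |B i j| ≤ E := fun i j => qfix_abs_le (hB i j)
  have hCe : ∀ i j, |C i j| ≤ E := fun i j => qfix_abs_le (hC i j)
  have hDe : ∀ i j, |D i j| ≤ E := fun i j => qfix_abs_le (hD i j)
  have hEeq : (2:ℝ)^ℓ * E = 2^(k-1) := by
    rw [hEdef]; field_simp
  -- rounding error in the output
  set e : ℕ → Fin p → ℝ := fun t i => yb t i - (2:ℝ)^ℓ * (Cp.mulVec (xph t)) i with hedef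
  have heb : ∀ t i, |e t i| ≤ 1/2 := by
    intro t i
    have h1 : e t i = ((round ((2:ℝ)^ℓ * yh t i) : ℤ) : ℝ) - (2:ℝ)^ℓ * yh t i := by
      simp only [hedef]
      rw [hyb t i, hyh t]
    rw [h1, abs_sub_comm]
    exact abs_sub_round _
  have hybe : ∀ t, yb t = (2:ℝ)^ℓ • Cp.mulVec (xph t) + e t := by
    intro t; funext i
    simp only [hedef, Pi.add_apply, Pi.smul_apply, smul_eq_mul]
    ring
  -- the perturbation δ and the exact recursion (part (i))
  have hround : ∀ t i, ((((2:ℝ)^ℓ • A).mulVec (xt t) + ((2:ℝ)^ℓ • B).mulVec (yb t)) i) / (2:ℝ)^ℓ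
      = (A.mulVec (xt t) + B.mulVec (yb t)) i := by
    intro t i
    rw [Matrix.smul_mulVec, Matrix.smul_mulVec]
    simp only [Pi.add_apply, Pi.smul_apply, smul_eq_mul]
    field_simp
  set δ : ℕ → Fin n → ℝ := fun t i => xt (t+1) i - (A.mulVec (xt t) + B.mulVec (yb t)) i with hδdef
  have hδi : ∀ t i, δ t i = ((round ((A.mulVec (xt t) + B.mulVec (yb t)) i) : ℤ) : ℝ)
      - (A.mulVec (xt t) + B.mulVec (yb t)) i + w t i := by
    intro t i
    simp only [hδdef]
    rw [hxt t i, hround t i]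
    ring
  have hδb : ∀ t, ‖δ t‖ ≤ 3/2 := by
    intro t
    rw [pi_norm_le_iff_of_nonneg (by norm_num)]
    intro i
    rw [Real.norm_eq_abs, hδi t i]
    have h1 : |((round ((A.mulVec (xt t) + B.mulVec (yb t)) i) : ℤ) : ℝ)
        - (A.mulVec (xt t) + B.mulVec (yb t)) i| ≤ 1/2 := by
      rw [abs_sub_comm]; exact abs_sub_round _
    have h2 : |w t i| ≤ 1 := by
      rcases hw t i with h | h | h <;> rw [h] <;> norm_num
    refine (abs_add_le _ _).trans ?_
    linarith
  have hxteq : ∀ t, xt (t+1) = A.mulVec (xt t) + B.mulVec (yb t) + δ t := by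
    intro t; funext i
    simp only [hδdef, Pi.add_apply]
    ring
  -- the aggregated closed-loop state ξ
  set ξ : ℕ → (Fin np ⊕ Fin n) → ℝ := fun t => Sum.elim (xph t) (((2:ℝ)^ℓ)⁻¹ • xt t) with hξdef
  have hξ0 : ξ 0 = Sum.elim xp0 x0 := by
    simp only [hξdef]
    rw [hxph0, hxt0, smul_smul, hRl, one_smul]
  have h2neg : (2:ℝ)^(-(2*ℓ:ℤ)) * (2:ℝ)^ℓ = ((2:ℝ)^ℓ)⁻¹ := by
    rw [zpow_neg, show ((2*ℓ:ℤ)) = (ℓ:ℤ) + (ℓ:ℤ) by ring, zpow_add₀ (two_ne_zero), zpow_natCast,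
      mul_inv, mul_assoc, hRl, mul_one]
  have hscale : ∀ t, (2:ℝ)^(-(2*ℓ:ℤ)) • ut t
      = ((2:ℝ)^ℓ)⁻¹ • (C.mulVec (xt t)) + ((2:ℝ)^ℓ)⁻¹ • (D.mulVec (yb t)) := by
    intro t
    rw [hut t, Matrix.smul_mulVec, Matrix.smul_mulVec, smul_add, smul_smul, smul_smul,
      h2neg]
  have hupper : ∀ t, xph (t+1) = (Ap + Bp*D*Cp).mulVec (xph t)
      + (Bp*C).mulVec (((2:ℝ)^ℓ)⁻¹ • xt t) + ((2:ℝ)^ℓ)⁻¹ • ((Bp*D).mulVec (e t)) := by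
    intro t
    rw [hxph t, hscale t]
    simp only [hybe t, Matrix.mulVec_add, Matrix.mulVec_smul, Matrix.mulVec_mulVec,
      Matrix.add_mulVec, smul_add, inv_smul_smul₀ h2lne]
    rw [show Bp*D*Cp = Bp*(D*Cp) from Matrix.mul_assoc Bp D Cp]
    abel
  have hlower : ∀ t, ((2:ℝ)^ℓ)⁻¹ • xt (t+1) = (B*Cp).mulVec (xph t)
      + A.mulVec (((2:ℝ)^ℓ)⁻¹ • xt t) + ((2:ℝ)^ℓ)⁻¹ • (B.mulVec (e t) + δ t) := by
    intro t
    rw [hxteq t]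
    simp only [hybe t, Matrix.mulVec_add, Matrix.mulVec_smul, Matrix.mulVec_mulVec,
      smul_add, inv_smul_smul₀ h2lne]
    abel
  have hξrec : ∀ t, ξ (t+1) = Φ.mulVec (ξ t)
      + ((2:ℝ)^ℓ)⁻¹ • (Γ.mulVec (e t) + Sum.elim (0 : Fin np → ℝ) (δ t)) := by
    intro t
    simp only [hξdef]
    rw [hΦdef, hΓdef, Matrix.fromBlocks_mulVec, Matrix.fromRows_mulVec]
    simp only [Sum.elim_comp_inl, Sum.elim_comp_inr]
    funext j
    cases j with
    | inl i =>
      have h := congrFun (hupper t) i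
      simp only [Pi.add_apply, Pi.smul_apply, smul_eq_mul, Sum.elim_inl, Pi.zero_apply] at h ⊢
      linarith [h]
    | inr i =>
      have h := congrFun (hlower t) i
      simp only [Pi.add_apply, Pi.smul_apply, smul_eq_mul, Sum.elim_inr, Pi.zero_apply] at h ⊢
      linarith [h]
  -- the perturbation sequence q and its bound
  set q : ℕ → (Fin np ⊕ Fin n) → ℝ :=
    fun s => ((2:ℝ)^ℓ)⁻¹ • (Γ.mulVec (e s) + Sum.elim (0 : Fin np → ℝ) (δ s)) with hqdef
  have hqb : ∀ s, ‖q s‖ ≤ ((2:ℝ)^ℓ)⁻¹ * (‖Γ‖/2 + 3/2) := by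
    intro s
    simp only [hqdef]
    rw [norm_smul, Real.norm_eq_abs, abs_of_pos (by positivity)]
    refine mul_le_mul_of_nonneg_left ?_ (by positivity)
    refine (norm_add_le _ _).trans ?_
    have h1 : ‖Γ.mulVec (e s)‖ ≤ ‖Γ‖ * (1/2) := by
      refine (Matrix.linfty_opNorm_mulVec _ _).trans ?_
      refine mul_le_mul_of_nonneg_left ?_ (norm_nonneg _)
      rw [pi_norm_le_iff_of_nonneg (by norm_num)]
      intro i; rw [Real.norm_eq_abs]; exact heb s i
    have h2 : ‖Sum.elim (0 : Fin np → ℝ) (δ s)‖ ≤ 3/2 := by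
      rw [pi_norm_le_iff_of_nonneg (by norm_num)]
      rintro (i|i)
      · simp only [Sum.elim_inl, Pi.zero_apply, norm_zero]; norm_num
      · simp only [Sum.elim_inr]
        exact (norm_le_pi_norm (δ s) i).trans (hδb s)
    linarith
  -- explicit solution formula
  have hsol : ∀ t, ξ t = (Φ^t).mulVec (ξ 0)
      + ∑ s ∈ Finset.range t, (Φ^(t-1-s)).mulVec (q s) := by
    intro t
    induction t with
    | zero => simp [Matrix.one_mulVec]
    | succ t ih =>
      rw [hξrec t, ih, Matrix.mulVec_add]
      have hmap : Φ.mulVec (∑ s ∈ Finset.range t, (Φ^(t-1-s)).mulVec (q s))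
          = ∑ s ∈ Finset.range t, Φ.mulVec ((Φ^(t-1-s)).mulVec (q s)) := by
        simp only [← Matrix.mulVecLin_apply]
        exact map_sum _ _ _
      rw [hmap]
      have hterm : ∀ s ∈ Finset.range t,
          Φ.mulVec ((Φ^(t-1-s)).mulVec (q s)) = (Φ^(t-s)).mulVec (q s) := by
        intro s hs
        have hs' : s < t := Finset.mem_range.1 hs
        rw [Matrix.mulVec_mulVec, ← pow_succ', show t-1-s+1 = t-s from by omega]
      rw [Finset.sum_congr rfl hterm, Finset.sum_range_succ]
      have hpow : ∀ s ∈ Finset.range t,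
          (Φ^(t+1-1-s)).mulVec (q s) = (Φ^(t-s)).mulVec (q s) := by
        intro s hs
        rw [show t+1-1-s = t-s from by omega]
      rw [Finset.sum_congr rfl hpow, Matrix.mulVec_mulVec, ← pow_succ']
      have : t + 1 - 1 - t = 0 := by omega
      rw [this, pow_zero, Matrix.one_mulVec]
      simp only [hqdef]
      abel
  -- norm bound on ξ
  have hnorm : ∀ t, ‖ξ t‖ ≤ ((2:ℝ)^ℓ)⁻¹ * (c/(1-γ) * β) := by
    intro t
    have h1 : ‖ξ t‖ ≤ c * γ^t * ‖ξ 0‖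
        + ∑ s ∈ Finset.range t, c * γ^(t-1-s) * (((2:ℝ)^ℓ)⁻¹ * (‖Γ‖/2+3/2)) := by
      rw [hsol t]
      have ha : ‖(Φ^t).mulVec (ξ 0)‖ ≤ c * γ^t * ‖ξ 0‖ := by
        refine (Matrix.linfty_opNorm_mulVec _ _).trans ?_
        exact mul_le_mul_of_nonneg_right (hΦ t) (norm_nonneg _)
      have hb : ∀ s ∈ Finset.range t, ‖(Φ^(t-1-s)).mulVec (q s)‖
          ≤ c * γ^(t-1-s) * (((2:ℝ)^ℓ)⁻¹*(‖Γ‖/2+3/2)) := by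
        intro s _
        refine (Matrix.linfty_opNorm_mulVec _ _).trans ?_
        exact mul_le_mul (hΦ _) (hqb s) (norm_nonneg _) (by positivity)
      exact (norm_add_le _ _).trans
        (add_le_add ha ((norm_sum_le _ _).trans (Finset.sum_le_sum hb)))
    have h2 : ∑ s ∈ Finset.range t, c * γ^(t-1-s) * (((2:ℝ)^ℓ)⁻¹ * (‖Γ‖/2+3/2))
        = c * (((2:ℝ)^ℓ)⁻¹ * (‖Γ‖/2+3/2)) * ∑ s ∈ Finset.range t, γ^(t-1-s) := by
      rw [Finset.mul_sum]
      exact Finset.sum_congr rfl fun s _ => by ring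
    have h3 : ∑ s ∈ Finset.range t, γ^(t-1-s) = ∑ j ∈ Finset.range t, γ^j :=
      Finset.sum_range_reflect (fun j => γ^j) t
    have h4 : ∑ j ∈ Finset.range t, γ^j ≤ 1/(1-γ) := by
      have hgm := geom_sum_mul γ t
      have hpow : (0:ℝ) ≤ γ ^ t := by positivity
      rw [le_div_iff₀ hγ']
      nlinarith
    have hγt : γ^t ≤ 1 := pow_le_one₀ (le_of_lt hγ0) (le_of_lt hγ1)
    have hd0 : (0:ℝ) ≤ ‖Γ‖/2 + 3/2 := by positivity
    have hξ0nn : (0:ℝ) ≤ ‖ξ 0‖ := norm_nonneg _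
    have h5 : c * γ^t * ‖ξ 0‖ ≤ c/(1-γ) * ‖ξ 0‖ := by
      have : c * γ^t ≤ c := by nlinarith
      exact mul_le_mul_of_nonneg_right (this.trans hc') hξ0nn
    have h6 : c * (((2:ℝ)^ℓ)⁻¹ * (‖Γ‖/2+3/2)) * ∑ j ∈ Finset.range t, γ^j
        ≤ c * (((2:ℝ)^ℓ)⁻¹ * (‖Γ‖/2+3/2)) * (1/(1-γ)) := by
      refine mul_le_mul_of_nonneg_left h4 (by positivity)
    have hβeq : β = (2:ℝ)^ℓ * ‖ξ 0‖ + (‖Γ‖/2 + 3/2) := by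
      rw [hβ, hξ0]; ring
    have hrhs : ((2:ℝ)^ℓ)⁻¹ * (c/(1-γ) * β)
        = c/(1-γ) * ‖ξ 0‖ + c * (((2:ℝ)^ℓ)⁻¹ * (‖Γ‖/2+3/2)) * (1/(1-γ)) := by
      rw [hβeq]
      field_simp
    rw [hrhs]
    calc ‖ξ t‖ ≤ c * γ^t * ‖ξ 0‖
        + ∑ s ∈ Finset.range t, c * γ^(t-1-s) * (((2:ℝ)^ℓ)⁻¹ * (‖Γ‖/2+3/2)) := h1
      _ = c * γ^t * ‖ξ 0‖
          + c * (((2:ℝ)^ℓ)⁻¹ * (‖Γ‖/2+3/2)) * ∑ j ∈ Finset.range t, γ^j := by rw [h2, h3]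
      _ ≤ _ := add_le_add h5 h6
  -- componentwise bounds on the trajectories
  set X : ℝ := c/(1-γ) * β with hXdef
  have hβ32 : (3:ℝ)/2 ≤ β := by
    rw [hβ]
    have h1 : (0:ℝ) ≤ (2:ℝ)^ℓ * ‖Sum.elim xp0 x0‖ := by positivity
    have h2 : (0:ℝ) ≤ ‖Γ‖/2 := by positivity
    linarith
  have hβ0 : (0:ℝ) < β := by linarith
  have hX0 : (0:ℝ) < X := by rw [hXdef]; positivity
  have hX1 : (1:ℝ) ≤ X := by
    rw [hXdef]
    nlinarith
  have hα1 : (1:ℝ) ≤ α := by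
    rw [hα]
    have := norm_nonneg Cp
    linarith
  have hα0 : (0:ℝ) < α := by linarith
  have hxphn : ∀ t, ‖xph t‖ ≤ ((2:ℝ)^ℓ)⁻¹ * X := by
    intro t
    rw [pi_norm_le_iff_of_nonneg (by positivity)]
    intro i
    have h := norm_le_pi_norm (ξ t) (Sum.inl i)
    have he' : ξ t (Sum.inl i) = xph t i := by simp [hξdef]
    rw [he', Real.norm_eq_abs] at h
    exact h.trans (hnorm t)
  have hxtn : ∀ t, ‖xt t‖ ≤ X := by
    intro t
    rw [pi_norm_le_iff_of_nonneg (le_of_lt hX0)]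
    intro i
    have h := norm_le_pi_norm (ξ t) (Sum.inr i)
    have he' : ξ t (Sum.inr i) = ((2:ℝ)^ℓ)⁻¹ * xt t i := by
      simp [hξdef]
    rw [he', Real.norm_eq_abs, abs_mul, abs_of_pos (by positivity : (0:ℝ) < ((2:ℝ)^ℓ)⁻¹)] at h
    have h' := h.trans (hnorm t)
    rw [Real.norm_eq_abs]
    have hinv : (0:ℝ) < ((2:ℝ)^ℓ)⁻¹ := by positivity
    calc |xt t i| = ((2:ℝ)^ℓ) * (((2:ℝ)^ℓ)⁻¹ * |xt t i|) := by
          field_simp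
      _ ≤ ((2:ℝ)^ℓ) * (((2:ℝ)^ℓ)⁻¹ * X) := by
          refine mul_le_mul_of_nonneg_left ?_ (le_of_lt h2l)
          exact h'
      _ = X := by field_simp
  have hybn : ∀ t, ‖yb t‖ ≤ α * X := by
    intro t
    rw [pi_norm_le_iff_of_nonneg (by positivity)]
    intro i
    rw [Real.norm_eq_abs]
    have hcpx : ‖Cp.mulVec (xph t)‖ ≤ ‖Cp‖ * (((2:ℝ)^ℓ)⁻¹ * X) :=
      (Matrix.linfty_opNorm_mulVec _ _).trans
        (mul_le_mul_of_nonneg_left (hxphn t) (norm_nonneg _))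
    have habs : |(2:ℝ)^ℓ * yh t i| ≤ ‖Cp‖ * X := by
      rw [hyh t, abs_mul, abs_of_pos h2l]
      have h := norm_le_pi_norm (Cp.mulVec (xph t)) i
      rw [Real.norm_eq_abs] at h
      calc (2:ℝ)^ℓ * |Cp.mulVec (xph t) i| ≤ (2:ℝ)^ℓ * (‖Cp‖ * (((2:ℝ)^ℓ)⁻¹ * X)) :=
            mul_le_mul_of_nonneg_left (h.trans hcpx) (le_of_lt h2l)
        _ = ‖Cp‖ * X := by field_simp; try ring
    have hrd : |(yb t i : ℝ)| ≤ |(2:ℝ)^ℓ * yh t i| + 1/2 := by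
      rw [hyb t i]
      have h := abs_sub_round ((2:ℝ)^ℓ * yh t i)
      have := abs_sub_abs_le_abs_sub (((round ((2:ℝ)^ℓ * yh t i) : ℤ) : ℝ)) ((2:ℝ)^ℓ * yh t i)
      rw [abs_sub_comm] at this
      linarith
    have h12 : (1:ℝ)/2 ≤ 3/2 * X := by nlinarith
    have : |(yb t i : ℝ)| ≤ ‖Cp‖ * X + 3/2 * X := by linarith
    calc |yb t i| ≤ ‖Cp‖ * X + 3/2 * X := this
      _ = α * X := by rw [hα]; ring
  -- the key magnitude constant
  set M : ℝ := ((max n p : ℕ) : ℝ) * α * β * (c / (1 - γ)) with hMdef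
  have hmax1 : (1:ℝ) ≤ ((max n p : ℕ) : ℝ) := by
    have : 1 ≤ max n p := le_trans hn (le_max_left _ _)
    exact_mod_cast this
  have hMeq : M = ((max n p : ℕ) : ℝ) * (α * X) := by
    rw [hMdef, hXdef]; ring
  have hαX0 : (0:ℝ) < α * X := mul_pos hα0 hX0
  have hαXM : α * X ≤ M := by
    rw [hMeq]
    nlinarith
  have hM0 : (0:ℝ) < M := lt_of_lt_of_le hαX0 hαXM
  -- the overflow threshold
  have hKM : (2:ℝ)^(k:ℤ) * M < (2:ℝ)^(κ-1) := by
    have hlog : M < (2:ℝ)^(Int.log 2 M + 1) := by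
      have := Int.lt_zpow_succ_log_self (b := 2) (by norm_num) M
      exact_mod_cast this
    have hle : Int.log 2 M + 1 + (k:ℤ) ≤ κ - 1 := by linarith [hκ]
    have hmono : (2:ℝ)^(Int.log 2 M + 1 + (k:ℤ)) ≤ (2:ℝ)^(κ-1) :=
      zpow_le_zpow_right₀ one_le_two hle
    calc (2:ℝ)^(k:ℤ) * M < (2:ℝ)^(k:ℤ) * (2:ℝ)^(Int.log 2 M + 1) := by
          refine mul_lt_mul_of_pos_left hlog (by positivity)
      _ = (2:ℝ)^(Int.log 2 M + 1 + (k:ℤ)) := by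
          rw [← zpow_add₀ (two_ne_zero : (2:ℝ) ≠ 0)]; ring_nf
      _ ≤ (2:ℝ)^(κ-1) := hmono
  have h2k : ((2:ℝ)^(k:ℤ)) = (2:ℝ)^k := zpow_natCast 2 k
  have h2k1 : (1:ℝ) ≤ (2:ℝ)^k := one_le_pow₀ one_le_two
  -- generic bound for the scaled matrix-vector entries
  have hgen : ∀ (r : ℕ) (P : Matrix (Fin r) (Fin n) ℝ) (Q : Matrix (Fin r) (Fin p) ℝ),
      (∀ i j, |P i j| ≤ E) → (∀ i j, |Q i j| ≤ E) → ∀ (t : ℕ) (i : Fin r),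
      |(((2:ℝ)^ℓ • P).mulVec (xt t) + ((2:ℝ)^ℓ • Q).mulVec (yb t)) i| ≤ (2:ℝ)^k * M := by
    intro r P Q hP hQ t i
    have h1 := mulVec_entry_abs_le P (xt t) hE0 hP i
    have h2 := mulVec_entry_abs_le Q (yb t) hE0 hQ i
    have hxn := hxtn t
    have hybn' := hybn t
    have hstep : |(((2:ℝ)^ℓ • P).mulVec (xt t) + ((2:ℝ)^ℓ • Q).mulVec (yb t)) i|
        ≤ (2:ℝ)^ℓ * ((n:ℝ) * E * ‖xt t‖) + (2:ℝ)^ℓ * ((p:ℝ) * E * ‖yb t‖) := by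
      rw [Matrix.smul_mulVec, Matrix.smul_mulVec]
      simp only [Pi.add_apply, Pi.smul_apply, smul_eq_mul]
      refine (abs_add_le _ _).trans ?_
      rw [abs_mul, abs_mul, abs_of_pos h2l]
      exact add_le_add (mul_le_mul_of_nonneg_left h1 (le_of_lt h2l))
        (mul_le_mul_of_nonneg_left h2 (le_of_lt h2l))
    refine hstep.trans ?_
    have hnle : ((n:ℝ)) ≤ ((max n p : ℕ) : ℝ) := by
      exact_mod_cast le_max_left n p
    have hple : ((p:ℝ)) ≤ ((max n p : ℕ) : ℝ) := by
      exact_mod_cast le_max_right n p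
    have ha : (n:ℝ) * ‖xt t‖ ≤ ((max n p : ℕ) : ℝ) * (α * X) := by
      have hxX : ‖xt t‖ ≤ α * X := by nlinarith [norm_nonneg (xt t)]
      exact mul_le_mul hnle hxX (norm_nonneg _) (by linarith)
    have hb : (p:ℝ) * ‖yb t‖ ≤ ((max n p : ℕ) : ℝ) * (α * X) := by
      exact mul_le_mul hple hybn' (norm_nonneg _) (by linarith)
    have hlhs : (2:ℝ)^ℓ * ((n:ℝ) * E * ‖xt t‖) + (2:ℝ)^ℓ * ((p:ℝ) * E * ‖yb t‖)
        = (2:ℝ)^(k-1) * ((n:ℝ) * ‖xt t‖ + (p:ℝ) * ‖yb t‖) := by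
      rw [← hEeq]; ring
    have hpoweq : (2:ℝ)^k = (2:ℝ)^(k-1) * 2 := by
      rw [← pow_succ]
      congr 1
      omega
    have hrhs : (2:ℝ)^k * M = (2:ℝ)^(k-1) * (2 * (((max n p : ℕ) : ℝ) * (α * X))) := by
      rw [hMeq, hpoweq]; ring
    rw [hlhs, hrhs]
    refine mul_le_mul_of_nonneg_left ?_ (by positivity)
    linarith [ha, hb]
  -- finish
  intro t
  have hyb_lt : ∀ i, |(yb t i : ℝ)| < (2:ℝ)^(κ-1) := by
    intro i
    have h := norm_le_pi_norm (yb t) i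
    rw [Real.norm_eq_abs] at h
    have h' : |(yb t i : ℝ)| ≤ α * X := h.trans (hybn t)
    have hM2k : M ≤ (2:ℝ)^(k:ℤ) * M := by
      rw [h2k]
      nlinarith
    calc |(yb t i : ℝ)| ≤ α * X := h'
      _ ≤ M := hαXM
      _ ≤ (2:ℝ)^(k:ℤ) * M := hM2k
      _ < (2:ℝ)^(κ-1) := hKM
  have hAB_lt : ∀ i, |(((2:ℝ)^ℓ • A).mulVec (xt t) + ((2:ℝ)^ℓ • B).mulVec (yb t)) i|
      < (2:ℝ)^(κ-1) := by
    intro i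
    have := hgen n A B hAe hBe t i
    rw [← h2k] at this
    exact lt_of_le_of_lt this hKM
  have hut_lt : ∀ i, |ut t i| < (2:ℝ)^(κ-1) := by
    intro i
    have h := hgen m C D hCe hDe t i
    rw [← h2k] at h
    rw [hut t]
    exact lt_of_le_of_lt h hKM
  refine ⟨⟨δ t, hδb t, hxteq t⟩, ?_, ?_, ?_⟩
  · intro i
    have h := abs_lt.1 (hyb_lt i)
    exact ⟨le_of_lt h.1, h.2⟩
  · intro i
    have h := abs_lt.1 (hAB_lt i)
    exact ⟨le_of_lt h.1, h.2⟩
  · intro i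
    have h := abs_lt.1 (hut_lt i)
    exact ⟨le_of_lt h.1, h.2⟩
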